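/- Fix a Bayesian principal-multi-agent instance with n agents, δ > 0, and a type profile λ ∈ Λ. Then AffineContract_δ guarantees ∑_ω F^λ_{a^λ_δ}(ω)( r_ω − ∑_{i∈N} p^{λ,i}_δ(ω) ) ≥ (δ/(1+δ)) · V_sw^{n(1+δ)}(λ), where V_sw^{n(1+δ)}(λ) := max_{a∈𝒜}( ∑_ω F^λ_a(ω) r_ω − n(1+δ) ∑_{i∈N} c_i^{λ_i}(a_i) ). -/

import Mathlib

open scoped Classical BigOperators

/-- A Bayesian principal-multi-agent instance. -/
structure BPMA where
  n : ℕ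
  npos : 0 < n
  Out : Type
  [fOut : Fintype Out]
  r : Out → ℝ
  r_nonneg : ∀ ω, 0 ≤ r ω
  r_le_one : ∀ ω, r ω ≤ 1
  A : Fin n → Type
  [fA : ∀ i, Fintype (A i)]
  [neA : ∀ i, Nonempty (A i)]
  Lam : Fin n → Type
  [fLam : ∀ i, Fintype (Lam i)]
  [neLam : ∀ i, Nonempty (Lam i)]
  G : (∀ i, Lam i) → ℝ
  G_nonneg : ∀ lam, 0 ≤ G lam
  G_sum_one : ∑ lam, G lam = 1
  c : ∀ i : Fin n, Lam i → A i → ℝ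
  c_nonneg : ∀ i li a, 0 ≤ c i li a
  c_le_one : ∀ i li a, c i li a ≤ 1
  c_zero : ∀ i li, ∃ a, c i li a = 0
  F : (∀ i, Lam i) → (∀ i, A i) → Out → ℝ
  F_nonneg : ∀ lam a ω, 0 ≤ F lam a ω
  F_sum_one : ∀ lam a, ∑ ω, F lam a ω = 1

attribute [instance] BPMA.fOut BPMA.fA BPMA.neA BPMA.fLam BPMA.neLam

namespace BPMA

variable (I : BPMA)

/-- Joint action profiles. -/
abbrev Profile := ∀ i, I.A i

/-- Type profiles. -/
abbrev TProf := ∀ i, I.Lam i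

/-- `μ` is a probability distribution over action profiles. -/
def IsDistrib (μ : I.Profile → ℝ) : Prop := (∀ a, 0 ≤ μ a) ∧ ∑ a, μ a = 1

/-- The (unnormalized) expected utility `U_i^{μ,π}(λ_i → λ_i', a_i → a_i' | λ_{-i})` of agent
`i` when the true type profile is `lam`, they report `li'`, receive recommendation `ai` and
play `ai'`. -/
noncomputable def Ubay (μ : I.TProf → I.Profile → ℝ)
    (π : I.TProf → Fin I.n → I.Profile → I.Out → ℝ)
    (i : Fin I.n) (lam : I.TProf) (li' : I.Lam i) (ai ai' : I.A i) : ℝ :=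
  ∑ a : I.Profile, if a i = ai then
      μ (Function.update lam i li') a *
        ((∑ ω, π (Function.update lam i li') i a ω *
          I.F lam (Function.update a i ai') ω) - I.c i (lam i) ai')
    else 0

/-- `(μ, π)` is a DSIC Bayesian randomized contract. -/
def RandDSIC (μ : I.TProf → I.Profile → ℝ)
    (π : I.TProf → Fin I.n → I.Profile → I.Out → ℝ) : Prop :=
  (∀ lam, I.IsDistrib (μ lam)) ∧ (∀ lam i a ω, 0 ≤ π lam i a ω) ∧
  ∀ (i : Fin I.n) (lam : I.TProf) (li' : I.Lam i),
    (∑ ai : I.A i, I.Ubay μ π i lam (lam i) ai ai) ≥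
      ∑ ai : I.A i, ⨆ ai' : I.A i, I.Ubay μ π i lam li' ai ai'

/-- Expected principal utility of a Bayesian randomized contract. -/
noncomputable def randUtilB (μ : I.TProf → I.Profile → ℝ)
    (π : I.TProf → Fin I.n → I.Profile → I.Out → ℝ) : ℝ :=
  ∑ lam : I.TProf, I.G lam *
    ∑ a : I.Profile, ∑ ω, μ lam a * I.F lam a ω * (I.r ω - ∑ i, π lam i a ω)

/-- `B-Opt_R`: supremum of the principal's expected utility over DSIC randomized contracts. -/
noncomputable def BOptR : ℝ := sSup {u | ∃ μ π, I.RandDSIC μ π ∧ u = I.randUtilB μ π}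

/-- The inducible action profiles at each type profile. -/
def AdagR (lam : I.TProf) : Set I.Profile :=
  {a | ∃ μ π, I.RandDSIC μ π ∧ 0 < μ lam a}

/-- Feasibility for the Bayesian linear program `B-LP(∞, A')`. -/
def BLPFeasInf (A' : I.TProf → Set I.Profile)
    (μ : I.TProf → I.Profile → ℝ)
    (x : I.TProf → Fin I.n → I.Profile → I.Out → ℝ)
    (z : ∀ i : Fin I.n, I.TProf → I.Lam i → I.A i → ℝ) : Prop :=
  (∀ lam, I.IsDistrib (μ lam)) ∧
  (∀ lam i a ω, 0 ≤ x lam i a ω) ∧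
  (∀ (i : Fin I.n) (lam : I.TProf) (li' : I.Lam i),
    (∑ a : I.Profile,
        ((∑ ω, x lam i a ω * I.F lam a ω) - μ lam a * I.c i (lam i) (a i))) ≥
      ∑ ai : I.A i, z i lam li' ai) ∧
  (∀ (i : Fin I.n) (lam : I.TProf) (li' : I.Lam i) (ai ai' : I.A i),
    z i lam li' ai ≥
      (∑ a : I.Profile, if a i = ai then
          (∑ ω, x (Function.update lam i li') i a ω *
            I.F lam (Function.update a i ai') ω)
        else 0) -
      (∑ a : I.Profile, if a i = ai then μ (Function.update lam i li') a else 0) *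
        I.c i (lam i) ai') ∧
  (∀ lam, ∀ a ∉ A' lam, μ lam a = 0 ∧ ∀ i ω, x lam i a ω = 0)

/-- The objective of the Bayesian linear program. -/
noncomputable def BLPobj (μ : I.TProf → I.Profile → ℝ)
    (x : I.TProf → Fin I.n → I.Profile → I.Out → ℝ) : ℝ :=
  ∑ lam : I.TProf, I.G lam *
    ∑ a : I.Profile, ∑ ω, I.F lam a ω * (μ lam a * I.r ω - ∑ i, x lam i a ω)

/-- A deterministic Bayesian contract `(𝔞, p)` is DSIC. -/
def DetDSIC (act : I.TProf → I.Profile) (p : I.TProf → Fin I.n → I.Out → ℝ) : Prop :=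
  ∀ (i : Fin I.n) (lam : I.TProf) (li' : I.Lam i) (ai' : I.A i),
    (∑ ω, I.F lam (act lam) ω * p lam i ω) - I.c i (lam i) (act lam i) ≥
      (∑ ω, I.F lam
          (Function.update (act (Function.update lam i li')) i ai') ω *
          p (Function.update lam i li') i ω) - I.c i (lam i) ai'

/-- Limited liability: payments are nonnegative. -/
def LL (p : I.TProf → Fin I.n → I.Out → ℝ) : Prop := ∀ lam i ω, 0 ≤ p lam i ω

/-- Individual rationality of a deterministic Bayesian contract. -/
def IR (act : I.TProf → I.Profile) (p : I.TProf → Fin I.n → I.Out → ℝ) : Prop :=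
  ∀ (lam : I.TProf) (i : Fin I.n),
    I.c i (lam i) (act lam i) ≤ ∑ ω, I.F lam (act lam) ω * p lam i ω

/-- Expected principal utility of a deterministic Bayesian contract. -/
noncomputable def detUtilB (act : I.TProf → I.Profile)
    (p : I.TProf → Fin I.n → I.Out → ℝ) : ℝ :=
  ∑ lam : I.TProf, I.G lam *
    ∑ ω, I.F lam (act lam) ω * (I.r ω - ∑ i, p lam i ω)

/-- `B-Opt_D`: supremum of the expected principal utility over DSIC deterministic contracts
satisfying limited liability. -/
noncomputable def BOptD : ℝ :=
  sSup {u | ∃ act p, I.DetDSIC act p ∧ I.LL p ∧ u = I.detUtilB act p}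

/-- `noLL-B-Opt_D`: supremum of the expected principal utility over DSIC and IR deterministic
contracts (payments may be negative). -/
noncomputable def noLLBOptD : ℝ :=
  sSup {u | ∃ act p, I.DetDSIC act p ∧ I.IR act p ∧ u = I.detUtilB act p}

/-- The α-virtual social welfare of the Bayesian instance. -/
noncomputable def VswB (α : ℝ) : ℝ :=
  ∑ lam : I.TProf, I.G lam *
    ⨆ a : I.Profile, ((∑ ω, I.F lam a ω * I.r ω) - α * ∑ i, I.c i (lam i) (a i))

/-- `act` is a selection of the argmax defining `AffineContract_δ`. -/
def AffSel (δ : ℝ) (act : I.TProf → I.Profile) : Prop :=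
  ∀ (lam : I.TProf) (a : I.Profile),
    (1 / ((I.n : ℝ) * (1 + δ))) * (∑ ω, I.F lam a ω * I.r ω) -
        ∑ i, I.c i (lam i) (a i) ≤
      (1 / ((I.n : ℝ) * (1 + δ))) * (∑ ω, I.F lam (act lam) ω * I.r ω) -
        ∑ i, I.c i (lam i) (act lam i)

/-- The payments of `AffineContract_δ`:
`p^{λ,i}_δ(ω) = r_ω/(n(1+δ)) − ∑_{j ≠ i} c_j^{λ_j}(a^λ_{δ,j})`. -/
noncomputable def affPay (δ : ℝ) (act : I.TProf → I.Profile)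
    (lam : I.TProf) (i : Fin I.n) (ω : I.Out) : ℝ :=
  I.r ω / ((I.n : ℝ) * (1 + δ)) -
    ∑ j ∈ Finset.univ.erase i, I.c j (lam j) (act lam j)

end BPMA

/-- For every `δ > 0` and every type profile `λ`, `AffineContract_δ`
guarantees principal utility at `λ` at least `(δ/(1+δ))·V_sw^{n(1+δ)}(λ)`. -/
theorem affine_contract_pointwise_bound (I : BPMA) (δ : ℝ) (hδ : 0 < δ)
    (act : I.TProf → I.Profile) (hact : I.AffSel δ act) (lam : I.TProf) :
    (δ / (1 + δ)) *
        (⨆ a : I.Profile, ((∑ ω, I.F lam a ω * I.r ω) -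
          (I.n : ℝ) * (1 + δ) * ∑ i, I.c i (lam i) (a i))) ≤
      ∑ ω, I.F lam (act lam) ω * (I.r ω - ∑ i, I.affPay δ act lam i ω) := by
  classical
  set K : ℝ := (I.n : ℝ) * (1 + δ) with hKdef
  have hn : (1 : ℝ) ≤ (I.n : ℝ) := by exact_mod_cast I.npos
  have h1δ : (0:ℝ) < 1 + δ := by linarith
  have hK : 0 < K := by
    apply mul_pos (by linarith) h1δ
  set R : ℝ := ∑ ω, I.F lam (act lam) ω * I.r ω with hR
  set C : ℝ := ∑ i, I.c i (lam i) (act lam i) with hC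
  have hCnn : 0 ≤ C := Finset.sum_nonneg fun i _ => I.c_nonneg i _ _
  -- simplify RHS
  have hpay : ∀ ω, ∑ i, I.affPay δ act lam i ω
      = (I.n : ℝ) * (I.r ω / K) - ((I.n : ℝ) * C - C) := by
    intro ω
    unfold BPMA.affPay
    rw [Finset.sum_sub_distrib, Finset.sum_const, Finset.card_univ]
    simp only [Fintype.card_fin, nsmul_eq_mul]
    congr 1
    rw [Finset.sum_congr rfl (fun i _ => Finset.sum_erase_eq_sub (Finset.mem_univ i)),
      Finset.sum_sub_distrib, Finset.sum_const, Finset.card_univ]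
    simp [hC, mul_comm]
  have hFsum : ∑ ω, I.F lam (act lam) ω = 1 := I.F_sum_one lam (act lam)
  have hRHS : ∑ ω, I.F lam (act lam) ω * (I.r ω - ∑ i, I.affPay δ act lam i ω)
      = R * (1 - (I.n : ℝ) / K) + ((I.n : ℝ) * C - C) := by
    have : ∀ ω, I.F lam (act lam) ω * (I.r ω - ∑ i, I.affPay δ act lam i ω)
        = I.F lam (act lam) ω * I.r ω * (1 - (I.n : ℝ) / K)
          + I.F lam (act lam) ω * ((I.n : ℝ) * C - C) := by
      intro ω
      rw [hpay ω]
      field_simp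
      ring
    rw [Finset.sum_congr rfl (fun ω _ => this ω), Finset.sum_add_distrib,
      ← Finset.sum_mul, ← Finset.sum_mul, hFsum, ← hR]
    ring
  rw [hRHS]
  -- bound each term of the sup
  have key : ∀ a : I.Profile,
      (δ / (1 + δ)) * ((∑ ω, I.F lam a ω * I.r ω) - K * ∑ i, I.c i (lam i) (a i))
        ≤ R * (1 - (I.n : ℝ) / K) + ((I.n : ℝ) * C - C) := by
    intro a
    have hs := hact lam a
    have h1 : (∑ ω, I.F lam a ω * I.r ω) - K * ∑ i, I.c i (lam i) (a i)
        ≤ R - K * C := by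
      have := mul_le_mul_of_nonneg_left hs (le_of_lt hK)
      rw [mul_sub, mul_sub, ← mul_assoc, ← mul_assoc, mul_one_div,
        div_self (ne_of_gt hK), one_mul, one_mul] at this
      exact this
    have h2 : (δ / (1 + δ)) * ((∑ ω, I.F lam a ω * I.r ω) - K * ∑ i, I.c i (lam i) (a i))
        ≤ (δ / (1 + δ)) * (R - K * C) :=
      mul_le_mul_of_nonneg_left h1 (le_of_lt (div_pos hδ h1δ))
    refine h2.trans ?_
    have hKδ : (δ / (1 + δ)) * K = δ * (I.n : ℝ) := by
      rw [hKdef]; field_simp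
    have hRK : (δ / (1 + δ)) * R = R * (1 - (I.n : ℝ) / K) := by
      rw [hKdef]
      field_simp
      ring
    rw [mul_sub, hRK, ← mul_assoc, hKδ]
    have : 0 ≤ δ * (I.n : ℝ) * C + ((I.n : ℝ) * C - C) := by
      have h0 : 0 ≤ δ * (I.n : ℝ) * C :=
        mul_nonneg (mul_nonneg hδ.le (by linarith)) hCnn
      have h1' : C ≤ (I.n : ℝ) * C := le_mul_of_one_le_left hCnn hn
      linarith
    linarith
  -- conclude via ciSup
  have hk : 0 < δ / (1 + δ) := div_pos hδ h1δ
  rw [mul_comm, ← le_div_iff₀ hk]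
  refine ciSup_le fun a => ?_
  rw [le_div_iff₀ hk, mul_comm]
  exact key a
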